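/- For the standard Cauchy location family f_θ(x) = 1/(π(1 + (x - θ)²)), the squared Hellinger distance satisfies h²(f_0, f_m) ≤ m²/16 for all real m. -/

import Mathlib

open MeasureTheory Real

noncomputable def hSq (f g : ℝ → ℝ) : ℝ :=
  (1/2) * ∫ x : ℝ, (Real.sqrt (f x) - Real.sqrt (g x))^2

noncomputable def cauchy (θ : ℝ) (x : ℝ) : ℝ :=
  (Real.pi * (1 + (x - θ)^2))⁻¹

/-! With `a = 1 + x²` and `b = 1 + (x - m)²`, the affinity `1 - h²` equals `π⁻¹ ∫ (ab)^(-1/2)`.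
Centering at `m / 2` writes `ab = s² - d²` with `s = t² + q²`, `q² = 1 + m²/4` and `d = m t`, and
`(1 - u)^(-1/2) ≥ 1 + u/2` bounds the integrand below by `s⁻¹ + d²/(2 s³)`. This lower bound has the
elementary integral `π / q + m² π / (16 q³)`, and what remains is `(q - 1)³ (q² + 3q + 1) ≥ 0`. -/

open Filter Topology ProbabilityTheory

lemma integrable_sqrt_mul_sqrt {α : Type*} [MeasurableSpace α] {μ : Measure α} {f g : α → ℝ}
    (hf : Integrable f μ) (hg : Integrable g μ) (hf0 : 0 ≤ f) (hg0 : 0 ≤ g) :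
    Integrable (fun x => √(f x) * √(g x)) μ := by
  refine ((hf.add hg).div_const 2).mono' ?_ (ae_of_all _ fun x => ?_)
  · exact (continuous_sqrt.comp_aestronglyMeasurable hf.aestronglyMeasurable).mul
      (continuous_sqrt.comp_aestronglyMeasurable hg.aestronglyMeasurable)
  · rw [norm_of_nonneg (by positivity), Pi.add_apply]
    nlinarith [sq_nonneg (√(f x) - √(g x)), sq_sqrt (hf0 x), sq_sqrt (hg0 x)]

lemma hSq_eq_one_sub_integral_sqrt_mul {f g : ℝ → ℝ} (hf : Integrable f) (hg : Integrable g)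
    (hf0 : 0 ≤ f) (hg0 : 0 ≤ g) (hf1 : ∫ x, f x = 1) (hg1 : ∫ x, g x = 1) :
    hSq f g = 1 - ∫ x, √(f x) * √(g x) := by
  have hexpand : ∀ x, (√(f x) - √(g x)) ^ 2 = f x + g x - 2 * (√(f x) * √(g x)) := fun x => by
    rw [sub_sq, sq_sqrt (hf0 x), sq_sqrt (hg0 x)]; ring
  have hsum : Integrable fun x => f x + g x := hf.add hg
  have hcross : Integrable fun x => 2 * (√(f x) * √(g x)) :=
    (integrable_sqrt_mul_sqrt hf hg hf0 hg0).const_mul 2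
  rw [hSq, integral_congr_ae (ae_of_all _ hexpand), integral_sub hsum hcross,
    integral_add hf hg, integral_const_mul, hf1, hg1]
  ring

lemma inv_add_sq_div_le_inv_sqrt_sq_sub_sq {s d : ℝ} (hs : 0 < s) (hsd : 0 < s ^ 2 - d ^ 2) :
    s⁻¹ + d ^ 2 / (2 * s ^ 3) ≤ (√(s ^ 2 - d ^ 2))⁻¹ := by
  have hroot : 0 < √(s ^ 2 - d ^ 2) := sqrt_pos.2 hsd
  have hlhs : s⁻¹ + d ^ 2 / (2 * s ^ 3) = (2 * s ^ 2 + d ^ 2) / (2 * s ^ 3) := by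
    field_simp
  rw [hlhs, ← one_div, div_le_div_iff₀ (by positivity) hroot, one_mul,
    ← pow_le_pow_iff_left₀ (by positivity) (by positivity) two_ne_zero, mul_pow, sq_sqrt hsd.le]
  nlinarith [sq_nonneg d, pow_nonneg (sq_nonneg d) 3, mul_nonneg (sq_nonneg s) (sq_nonneg (d ^ 2))]

lemma tendsto_mul_sq_sub_one_div_one_add_sq_sq :
    Tendsto (fun u : ℝ => u * (u ^ 2 - 1) / (1 + u ^ 2) ^ 2) (cocompact ℝ) (𝓝 0) := by
  have hinv : Tendsto (fun u : ℝ => |u|⁻¹) (cocompact ℝ) (𝓝 0) :=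
    tendsto_inv_atTop_zero.comp tendsto_norm_cocompact_atTop
  refine squeeze_zero_norm (fun u => ?_) hinv
  rcases eq_or_ne u 0 with rfl | hu
  · simp
  have hu' : 0 < |u| := abs_pos.2 hu
  rw [Real.norm_eq_abs, abs_div, abs_mul, abs_of_pos (by positivity : (0 : ℝ) < (1 + u ^ 2) ^ 2),
    div_le_iff₀ (by positivity)]
  have h1 : |u ^ 2 - 1| ≤ 1 + u ^ 2 := abs_le.2 ⟨by nlinarith, by nlinarith⟩
  calc |u| * |u ^ 2 - 1| ≤ |u| * (1 + u ^ 2) := by gcongr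
    _ ≤ |u|⁻¹ * (1 + u ^ 2) ^ 2 := by
      rw [← div_eq_inv_mul, le_div_iff₀ hu', mul_comm, ← mul_assoc, abs_mul_abs_self]
      nlinarith [sq_nonneg u]

lemma hasDerivAt_antideriv_sq_div_one_add_sq_pow_three (u : ℝ) :
    HasDerivAt (fun u : ℝ => (u * (u ^ 2 - 1) / (1 + u ^ 2) ^ 2 + arctan u) / 8)
      (u ^ 2 / (1 + u ^ 2) ^ 3) u := by
  have hpos : 0 < 1 + u ^ 2 := by positivity
  have hsq : HasDerivAt (fun u : ℝ => u ^ 2) (2 * u) u := by simpa using hasDerivAt_pow 2 u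
  refine ((((hasDerivAt_id' u).mul (hsq.sub_const 1)).div
    ((hsq.const_add 1).pow 2) (pow_pos hpos 2).ne').add
    (hasDerivAt_arctan u)).div_const 8 |>.congr_deriv ?_
  simp only [Pi.mul_apply, Pi.pow_apply]
  field_simp
  ring

lemma integrable_sq_div_one_add_sq_pow_three :
    Integrable fun u : ℝ => u ^ 2 / (1 + u ^ 2) ^ 3 := by
  refine integrable_inv_one_add_sq.mono' (Measurable.aestronglyMeasurable (by fun_prop))
    (ae_of_all _ fun u => ?_)
  have hpos : 0 < 1 + u ^ 2 := by positivity
  rw [norm_of_nonneg (by positivity), div_le_iff₀ (by positivity),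
    show (1 + u ^ 2)⁻¹ * (1 + u ^ 2) ^ 3 = (1 + u ^ 2) ^ 2 by field_simp]
  nlinarith [sq_nonneg u, sq_nonneg (u ^ 2)]

lemma integral_sq_div_one_add_sq_pow_three : ∫ u : ℝ, u ^ 2 / (1 + u ^ 2) ^ 3 = π / 8 := by
  have hlim : ∀ l ≤ cocompact ℝ, ∀ c : ℝ, Tendsto arctan l (𝓝 c) →
      Tendsto (fun u : ℝ => (u * (u ^ 2 - 1) / (1 + u ^ 2) ^ 2 + arctan u) / 8) l (𝓝 (c / 8)) :=
    fun l hl c hc => by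
      simpa using ((tendsto_mul_sq_sub_one_div_one_add_sq_sq.mono_left hl).add hc).div_const 8
  rw [integral_of_hasDerivAt_of_tendsto hasDerivAt_antideriv_sq_div_one_add_sq_pow_three
    integrable_sq_div_one_add_sq_pow_three
    (hlim _ atBot_le_cocompact _ (tendsto_nhds_of_tendsto_nhdsWithin tendsto_arctan_atBot))
    (hlim _ atTop_le_cocompact _ (tendsto_nhds_of_tendsto_nhdsWithin tendsto_arctan_atTop))]
  ring

lemma inv_sq_add_sq_eq {q : ℝ} (hq : q ≠ 0) (t : ℝ) :
    (t ^ 2 + q ^ 2)⁻¹ = (q ^ 2)⁻¹ * (1 + (t / q) ^ 2)⁻¹ := by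
  field_simp; ring

lemma sq_div_sq_add_sq_pow_three_eq {q : ℝ} (hq : q ≠ 0) (t : ℝ) :
    t ^ 2 / (t ^ 2 + q ^ 2) ^ 3 = (q ^ 4)⁻¹ * ((t / q) ^ 2 / (1 + (t / q) ^ 2) ^ 3) := by
  field_simp; ring

lemma integrable_inv_sq_add_sq {q : ℝ} (hq : q ≠ 0) :
    Integrable fun t : ℝ => (t ^ 2 + q ^ 2)⁻¹ := by
  simpa only [inv_sq_add_sq_eq hq] using (integrable_inv_one_add_sq.comp_div hq).const_mul _

lemma integrable_sq_div_sq_add_sq_pow_three {q : ℝ} (hq : q ≠ 0) :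
    Integrable fun t : ℝ => t ^ 2 / (t ^ 2 + q ^ 2) ^ 3 := by
  simpa only [sq_div_sq_add_sq_pow_three_eq hq] using
    (integrable_sq_div_one_add_sq_pow_three.comp_div hq).const_mul _

lemma integral_univ_inv_sq_add_sq {q : ℝ} (hq : 0 < q) : ∫ t : ℝ, (t ^ 2 + q ^ 2)⁻¹ = π / q := by
  simp_rw [inv_sq_add_sq_eq hq.ne']
  rw [integral_const_mul, Measure.integral_comp_div (fun u : ℝ => (1 + u ^ 2)⁻¹),
    integral_univ_inv_one_add_sq, abs_of_pos hq, smul_eq_mul]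
  field_simp

lemma integral_sq_div_sq_add_sq_pow_three {q : ℝ} (hq : 0 < q) :
    ∫ t : ℝ, t ^ 2 / (t ^ 2 + q ^ 2) ^ 3 = π / (8 * q ^ 3) := by
  simp_rw [sq_div_sq_add_sq_pow_three_eq hq.ne']
  rw [integral_const_mul, Measure.integral_comp_div (fun u : ℝ => u ^ 2 / (1 + u ^ 2) ^ 3),
    integral_sq_div_one_add_sq_pow_three, abs_of_pos hq, smul_eq_mul]
  field_simp

-- `open Real` brings `Real.cauchy` into scope, hence `_root_.cauchy` where the two could clash.
lemma cauchy_eq_cauchyPDFReal (θ : ℝ) : _root_.cauchy θ = cauchyPDFReal θ 1 := by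
  ext x
  simp [_root_.cauchy, cauchyPDFReal_def', mul_comm]

lemma cauchy_pos (θ x : ℝ) : 0 < _root_.cauchy θ x := by
  unfold _root_.cauchy; positivity

lemma integrable_cauchy (θ : ℝ) : Integrable (_root_.cauchy θ) := by
  rw [cauchy_eq_cauchyPDFReal]; exact integrable_cauchyPDFReal θ

lemma integral_cauchy (θ : ℝ) : ∫ x, _root_.cauchy θ x = 1 := by
  rw [cauchy_eq_cauchyPDFReal]; exact integral_cauchyPDFReal_eq_one θ one_ne_zero

lemma hSq_cauchy (θ θ' : ℝ) :
    hSq (cauchy θ) (cauchy θ') = 1 - ∫ x, √(_root_.cauchy θ x) * √(_root_.cauchy θ' x) :=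
  hSq_eq_one_sub_integral_sqrt_mul (integrable_cauchy θ) (integrable_cauchy θ')
    (fun x => (cauchy_pos θ x).le) (fun x => (cauchy_pos θ' x).le)
    (integral_cauchy θ) (integral_cauchy θ')

lemma sqrt_cauchy_mul_sqrt_cauchy (m t : ℝ) :
    √(_root_.cauchy 0 (t + m / 2)) * √(_root_.cauchy m (t + m / 2)) =
      π⁻¹ * (√((t ^ 2 + (1 + m ^ 2 / 4)) ^ 2 - (m * t) ^ 2))⁻¹ := by
  rw [← sqrt_mul (cauchy_pos 0 _).le, _root_.cauchy, _root_.cauchy, ← mul_inv, sqrt_inv,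
    show π * (1 + (t + m / 2 - 0) ^ 2) * (π * (1 + (t + m / 2 - m) ^ 2)) =
      π ^ 2 * ((t ^ 2 + (1 + m ^ 2 / 4)) ^ 2 - (m * t) ^ 2) by ring,
    sqrt_mul (by positivity), sqrt_sq pi_pos.le, mul_inv]

lemma le_integral_sqrt_cauchy_mul_sqrt_cauchy {m q : ℝ} (hq : 0 < q)
    (hqm : q ^ 2 = 1 + m ^ 2 / 4) :
    1 / q + m ^ 2 / (16 * q ^ 3) ≤ ∫ x, √(_root_.cauchy 0 x) * √(_root_.cauchy m x) := by
  set lower : ℝ → ℝ :=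
    fun t => π⁻¹ * ((t ^ 2 + q ^ 2)⁻¹ + m ^ 2 / 2 * (t ^ 2 / (t ^ 2 + q ^ 2) ^ 3))
  have hlower_int : Integrable lower :=
    ((integrable_inv_sq_add_sq hq.ne').add
      ((integrable_sq_div_sq_add_sq_pow_three hq.ne').const_mul _)).const_mul _
  have hlower_val : ∫ t, lower t = 1 / q + m ^ 2 / (16 * q ^ 3) := by
    rw [integral_const_mul, integral_add (integrable_inv_sq_add_sq hq.ne')
      ((integrable_sq_div_sq_add_sq_pow_three hq.ne').const_mul _), integral_const_mul,
      integral_univ_inv_sq_add_sq hq, integral_sq_div_sq_add_sq_pow_three hq]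
    field_simp
    ring
  have hle : ∀ t, lower t ≤ √(_root_.cauchy 0 (t + m / 2)) * √(_root_.cauchy m (t + m / 2)) := by
    intro t
    have hs : 0 < t ^ 2 + q ^ 2 := by positivity
    have hsd : 0 < (t ^ 2 + q ^ 2) ^ 2 - (m * t) ^ 2 := by
      rw [show (t ^ 2 + q ^ 2) ^ 2 - (m * t) ^ 2 = (1 + (t + m / 2) ^ 2) * (1 + (t - m / 2) ^ 2) by
        rw [hqm]; ring]
      positivity
    calc lower t = π⁻¹ * ((t ^ 2 + q ^ 2)⁻¹ + (m * t) ^ 2 / (2 * (t ^ 2 + q ^ 2) ^ 3)) := by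
          dsimp only [lower]; field_simp
      _ ≤ π⁻¹ * (√((t ^ 2 + q ^ 2) ^ 2 - (m * t) ^ 2))⁻¹ := by
        gcongr
        exact inv_add_sq_div_le_inv_sqrt_sq_sub_sq hs hsd
      _ = _ := by rw [hqm, sqrt_cauchy_mul_sqrt_cauchy]
  have hprod_int := integrable_sqrt_mul_sqrt (integrable_cauchy 0) (integrable_cauchy m)
    (fun x => (cauchy_pos 0 x).le) (fun x => (cauchy_pos m x).le)
  rw [← hlower_val,
    ← integral_add_right_eq_self (fun x => √(_root_.cauchy 0 x) * √(_root_.cauchy m x)) (m / 2)]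
  exact integral_mono hlower_int (hprod_int.comp_add_right (m / 2)) hle

lemma one_sub_inv_sub_le_sq_div_sixteen {m q : ℝ} (hq : 1 ≤ q) (hqm : q ^ 2 = 1 + m ^ 2 / 4) :
    1 - (1 / q + m ^ 2 / (16 * q ^ 3)) ≤ m ^ 2 / 16 := by
  have hm : m ^ 2 = 4 * q ^ 2 - 4 := by linarith
  have hq0 : 0 < q := by linarith
  have hfactor : 0 ≤ (q - 1) ^ 3 * (q ^ 2 + 3 * q + 1) :=
    mul_nonneg (pow_nonneg (by linarith) 3) (by positivity)
  have hgap : (4 * q ^ 2 - 4) / 16 - (1 - (1 / q + (4 * q ^ 2 - 4) / (16 * q ^ 3))) =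
      (q - 1) ^ 3 * (q ^ 2 + 3 * q + 1) / (4 * q ^ 3) := by
    field_simp; ring
  rw [hm, ← sub_nonneg, hgap]
  exact div_nonneg hfactor (by positivity)

theorem stmt11 (m : ℝ) :
    hSq (cauchy 0) (cauchy m) ≤ m^2 / 16 := by
  set q := √(1 + m ^ 2 / 4)
  have hqm : q ^ 2 = 1 + m ^ 2 / 4 := sq_sqrt (by positivity)
  have hq : 1 ≤ q := one_le_sqrt.2 (by linarith [sq_nonneg m])
  rw [hSq_cauchy]
  linarith [le_integral_sqrt_cauchy_mul_sqrt_cauchy (by linarith) hqm,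
    one_sub_inv_sub_le_sq_div_sixteen hq hqm]
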